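/- Define the entire function W₁ : ℂ → ℂ by W₁(λ) = cos(π√(λ² + 1/4)) (the value independent of the branch of the square root since cosine is even). Then W₁ is of sine-type, all its zeros are real, and its zero set is exactly {λ ∈ ℂ : λ² = k² + k for some k ∈ ℕ} = {±√(k² + k) : k ∈ ℕ}; in particular every zero λ satisfies λ² = 1·l with l = k² + k an integer, so W₁ is a generating function for attenuation at Fresnel number 𝔣 = 1. -/

import Mathlib

open MeasureTheory Complex Filter
open scoped FourierTransform Real Topology

noncomputable section

structure IsSineType (W : ℂ → ℂ) : Prop where
  entire : Differentiable ℂ W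
  separated : ∃ c > 0, ∀ lam ∈ {z : ℂ | W z = 0}, ∀ mu ∈ {z : ℂ | W z = 0},
      lam ≠ mu → c ≤ ‖lam - mu‖
  bounds : ∃ A > 0, ∃ B > 0, ∃ H > 0, ∀ lam : ℂ, H ≤ |lam.im| →
      B * Real.exp (π * |lam.im|) ≤ ‖W lam‖ ∧
      ‖W lam‖ ≤ A * Real.exp (π * |lam.im|)

/-- `W` is a generating function for attenuation at Fresnel number `f`:
of sine-type, all zeros real, and each zero satisfies `λ² = f·l` for some integer `l`. -/
structure IsGeneratingAtten (f : ℝ) (W : ℂ → ℂ) : Prop where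
  sineType : IsSineType W
  realZeros : ∀ z : ℂ, W z = 0 → ∃ x : ℝ, z = (x : ℂ)
  quantized : ∀ z : ℂ, W z = 0 → ∃ l : ℤ, z ^ 2 = (f : ℂ) * (l : ℂ)

/-!
Since `cos` is even, `cos (π √u)` does not depend on the branch of `√u`, and it is an entire
function of `u`: near any `u ≠ 0` one of the branches `√u`, `I √(-u)` is holomorphic, and at
`u = 0` the function is continuous, so Riemann's removable singularity theorem applies.
Its zeros are the `u = (k + 1/2)²`, i.e. `λ² = k² + k`, and the zeros `±√(k² + k)` are
`1`-separated because `√(k² + k) + 1 ≤ √((k + 1)² + (k + 1))`.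
If `w² = λ² + 1/4` then `|Im λ| - 1/2 ≤ |Im w| ≤ |Im λ|`, and
`e^{|Im θ|} - e^{-|Im θ|} ≤ 2 ‖cos θ‖ ≤ 2 e^{|Im θ|}` turns this into the sine-type bounds.
-/

theorem Function.Even.apply_eq_of_sq_eq {R β : Type*} [CommRing R] [NoZeroDivisors R]
    {g : R → β} (hg : g.Even) {v w : R} (h : v ^ 2 = w ^ 2) : g v = g w := by
  rcases sq_eq_sq_iff_eq_or_eq_neg.mp h with rfl | rfl
  exacts [rfl, hg w]

theorem Complex.cpow_one_div_two_sq (u : ℂ) : (u ^ (1 / 2 : ℂ)) ^ 2 = u := by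
  simpa only [one_div] using cpow_ofNat_inv_pow u 2

theorem Function.Even.differentiable_comp_cpow_one_div_two {E : Type*} [NormedAddCommGroup E]
    [NormedSpace ℂ E] [CompleteSpace E] {g : ℂ → E} (hg : g.Even) (hd : Differentiable ℂ g) :
    Differentiable ℂ fun u : ℂ => g (u ^ (1 / 2 : ℂ)) := by
  -- off the slit plane use the branch `I * √(-u)`, which has the same square
  have hbranch : (fun u : ℂ => g (u ^ (1 / 2 : ℂ))) = fun u => g (I * (-u) ^ (1 / 2 : ℂ)) :=
    funext fun u => hg.apply_eq_of_sq_eq <| by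
      rw [mul_pow, I_sq, cpow_one_div_two_sq, cpow_one_div_two_sq, neg_one_mul, neg_neg]
  have hoff : DifferentiableOn ℂ (fun u : ℂ => g (u ^ (1 / 2 : ℂ))) (Set.univ \ {0}) := by
    rintro u ⟨-, hu⟩
    refine DifferentiableAt.differentiableWithinAt ?_
    rcases mem_slitPlane_or_neg_mem_slitPlane hu with hslit | hslit
    · exact hd.differentiableAt.comp u (differentiableAt_id.cpow_const hslit)
    · rw [hbranch]
      exact hd.differentiableAt.comp u
        ((differentiableAt_id.neg.cpow_const hslit).const_mul I)
  have hzero : ContinuousAt (fun u : ℂ => g (u ^ (1 / 2 : ℂ))) 0 :=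
    hd.continuous.continuousAt.comp
      (continuousAt_cpow_const_of_re_pos (by simp) (by norm_num))
  rw [← differentiableOn_univ]
  exact (differentiableOn_compl_singleton_and_continuousAt_iff Filter.univ_mem).mp ⟨hoff, hzero⟩

namespace Complex

theorem even_cos_mul (a : ℂ) : Function.Even fun v : ℂ => cos (a * v) :=
  fun v => by simp only [mul_neg, cos_neg]

theorem cos_pi_mul_eq_zero_iff {w : ℂ} : cos (π * w) = 0 ↔ ∃ k : ℤ, w = k + 1 / 2 := by
  have hπ : (π : ℂ) ≠ 0 := ofReal_ne_zero.mpr Real.pi_ne_zero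
  refine cos_eq_zero_iff.trans (exists_congr fun k => ?_)
  rw [show (2 * k + 1) * (π : ℂ) / 2 = π * (k + 1 / 2) by ring]
  exact mul_right_inj' hπ

theorem norm_exp_mul_I (θ : ℂ) : ‖exp (θ * I)‖ = Real.exp (-θ.im) := by
  simp [norm_exp]

theorem two_mul_norm_cos (θ : ℂ) : 2 * ‖cos θ‖ = ‖exp (θ * I) + exp (-θ * I)‖ := by
  rw [← two_cos, norm_mul, Complex.norm_two]

theorem norm_cos_le_exp_abs_im (θ : ℂ) : ‖cos θ‖ ≤ Real.exp |θ.im| := by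
  have htri := norm_add_le (exp (θ * I)) (exp (-θ * I))
  rw [← two_mul_norm_cos, norm_exp_mul_I, norm_exp_mul_I, neg_im, neg_neg] at htri
  have h₁ : Real.exp (-θ.im) ≤ Real.exp |θ.im| := Real.exp_le_exp.mpr (neg_le_abs _)
  have h₂ : Real.exp θ.im ≤ Real.exp |θ.im| := Real.exp_le_exp.mpr (le_abs_self _)
  linarith

theorem exp_abs_im_sub_exp_neg_abs_im_le (θ : ℂ) :
    Real.exp |θ.im| - Real.exp (-|θ.im|) ≤ 2 * ‖cos θ‖ := by
  have h₁ := norm_sub_norm_le (exp (θ * I)) (-exp (-θ * I))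
  have h₂ := norm_sub_norm_le (exp (-θ * I)) (-exp (θ * I))
  rw [sub_neg_eq_add, norm_neg] at h₁ h₂
  rw [add_comm] at h₂
  rw [← two_mul_norm_cos, norm_exp_mul_I, norm_exp_mul_I, neg_im, neg_neg] at h₁ h₂
  rcases abs_cases θ.im with ⟨h, -⟩ | ⟨h, -⟩
  · rw [h]; linarith
  · rw [h, neg_neg]; linarith

theorem im_sq_le_of_sq_eq_add {s z : ℂ} {c : ℝ} (hc : 0 ≤ c) (h : s ^ 2 = z ^ 2 + c) :
    s.im ^ 2 ≤ z.im ^ 2 ∧ z.im ^ 2 - c ≤ s.im ^ 2 := by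
  have hre : s.re ^ 2 - s.im ^ 2 = z.re ^ 2 - z.im ^ 2 + c := by
    simpa [sq] using congrArg re h
  have him : s.re * s.im = z.re * z.im := by
    have := congrArg im h
    simp only [sq, mul_im, add_im, ofReal_im, add_zero] at this
    linarith
  have hprod : s.re ^ 2 * s.im ^ 2 = z.re ^ 2 * z.im ^ 2 := by
    rw [← mul_pow, ← mul_pow, him]
  constructor
  · by_contra! hlt
    nlinarith [sq_nonneg s.re, sq_nonneg z.re, sq_nonneg z.im]
  · by_contra! hlt
    nlinarith [sq_nonneg s.im, sq_nonneg z.re, sq_nonneg s.re]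

end Complex

theorem Int.exists_nat_sq_add_self_eq (k : ℤ) : ∃ m : ℕ, (m : ℤ) ^ 2 + m = k ^ 2 + k := by
  rcases le_or_gt 0 k with hk | hk
  · exact ⟨k.toNat, by rw [Int.toNat_of_nonneg hk]⟩
  · exact ⟨(-1 - k).toNat, by rw [Int.toNat_of_nonneg (by omega)]; ring⟩

theorem Real.sqrt_sq_add_self_add_one_le {j k : ℕ} (h : j < k) :
    √((j : ℝ) ^ 2 + j) + 1 ≤ √((k : ℝ) ^ 2 + k) := by
  set s := √((j : ℝ) ^ 2 + j)
  have hs : s ^ 2 = (j : ℝ) ^ 2 + j := Real.sq_sqrt (by positivity)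
  have hs₀ : 0 ≤ s := Real.sqrt_nonneg _
  have hjk : (j : ℝ) + 1 ≤ k := by exact_mod_cast h
  -- `s ≤ j + 1/2` because `j² + j < (j + 1/2)²`
  have hsj : s ≤ j + 1 / 2 := by nlinarith
  exact Real.le_sqrt_of_sq_le (by nlinarith)

theorem Real.one_le_abs_sub_of_sq_eq_sq_add_self {x y : ℝ} {j k : ℕ} (hx : x ^ 2 = j ^ 2 + j)
    (hy : y ^ 2 = k ^ 2 + k) (hxy : x ≠ y) : 1 ≤ |x - y| := by
  wlog hjk : j ≤ k generalizing x y j k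
  · rw [abs_sub_comm]
    exact this hy hx hxy.symm (by omega)
  have habs : ∀ {t : ℝ} {n : ℕ}, t ^ 2 = n ^ 2 + n → |t| = √((n : ℝ) ^ 2 + n) := fun ht => by
    rw [← ht, Real.sqrt_sq_eq_abs]
  rcases hjk.lt_or_eq with hlt | rfl
  · have := Real.sqrt_sq_add_self_add_one_le hlt
    rw [← habs hx, ← habs hy] at this
    linarith [abs_sub_abs_le_abs_sub y x, abs_sub_comm x y]
  · obtain rfl : y = -x := (sq_eq_sq_iff_eq_or_eq_neg.mp (hy.trans hx.symm)).resolve_left hxy.symm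
    have hx₀ : x ≠ 0 := fun h => hxy (by simp [h])
    have hj : (1 : ℝ) ≤ j := by
      rcases Nat.eq_zero_or_pos j with rfl | hj
      · simp_all
      · exact_mod_cast hj
    rw [sub_neg_eq_add, ← two_mul, abs_mul, abs_two]
    nlinarith [sq_abs x, abs_nonneg x]

namespace AttenuationOne

def W₁ (z : ℂ) : ℂ := cos (π * (z ^ 2 + 1 / 4) ^ (1 / 2 : ℂ))

theorem W₁_eq_cos_of_sq_eq {z w : ℂ} (h : w ^ 2 = z ^ 2 + 1 / 4) : W₁ z = cos (π * w) :=
  (even_cos_mul π).apply_eq_of_sq_eq (by rw [cpow_one_div_two_sq, h])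

theorem differentiable_W₁ : Differentiable ℂ W₁ :=
  ((even_cos_mul π).differentiable_comp_cpow_one_div_two (by fun_prop)).comp (by fun_prop)

theorem W₁_eq_zero_iff {z : ℂ} : W₁ z = 0 ↔ ∃ k : ℕ, z ^ 2 = (k : ℂ) ^ 2 + k := by
  constructor
  · intro hz
    obtain ⟨k, hk⟩ := cos_pi_mul_eq_zero_iff.mp hz
    obtain ⟨m, hm⟩ := Int.exists_nat_sq_add_self_eq k
    have hsq := cpow_one_div_two_sq (z ^ 2 + 1 / 4)
    rw [hk] at hsq
    refine ⟨m, ?_⟩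
    have hm' : (m : ℂ) ^ 2 + m = (k : ℂ) ^ 2 + k := by exact_mod_cast hm
    linear_combination -hm' - hsq
  · rintro ⟨k, hk⟩
    rw [W₁_eq_cos_of_sq_eq (w := k + 1 / 2) (by linear_combination -hk)]
    exact cos_pi_mul_eq_zero_iff.mpr ⟨k, by push_cast; ring⟩

theorem sq_eq_nat_sq_add_self_iff {z : ℂ} {k : ℕ} :
    z ^ 2 = (k : ℂ) ^ 2 + k ↔ z = (√((k : ℝ) ^ 2 + k) : ℂ) ∨ z = -(√((k : ℝ) ^ 2 + k) : ℂ) := by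
  rw [← sq_eq_sq_iff_eq_or_eq_neg, ← ofReal_pow, Real.sq_sqrt (by positivity)]
  push_cast
  rfl

theorem exists_real_of_W₁_eq_zero {z : ℂ} (hz : W₁ z = 0) :
    ∃ x : ℝ, ∃ k : ℕ, z = x ∧ x ^ 2 = (k : ℝ) ^ 2 + k := by
  obtain ⟨k, hk⟩ := W₁_eq_zero_iff.mp hz
  rcases sq_eq_nat_sq_add_self_iff.mp hk with rfl | rfl
  · exact ⟨_, k, rfl, Real.sq_sqrt (by positivity)⟩
  · exact ⟨_, k, (ofReal_neg _).symm, by rw [neg_sq, Real.sq_sqrt (by positivity)]⟩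

theorem one_le_norm_sub_of_W₁_eq_zero {lam mu : ℂ} (hlam : W₁ lam = 0) (hmu : W₁ mu = 0)
    (hne : lam ≠ mu) : 1 ≤ ‖lam - mu‖ := by
  obtain ⟨x, j, rfl, hx⟩ := exists_real_of_W₁_eq_zero hlam
  obtain ⟨y, k, rfl, hy⟩ := exists_real_of_W₁_eq_zero hmu
  rw [← ofReal_sub, norm_real, Real.norm_eq_abs]
  exact Real.one_le_abs_sub_of_sq_eq_sq_add_self hx hy (fun h => hne (by rw [h]))

theorem norm_W₁_le (z : ℂ) : ‖W₁ z‖ ≤ Real.exp (π * |z.im|) := by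
  set s := (z ^ 2 + 1 / 4) ^ (1 / 2 : ℂ)
  have hs : s ^ 2 = z ^ 2 + ((1 / 4 : ℝ) : ℂ) := by push_cast; exact cpow_one_div_two_sq _
  have him : |s.im| ≤ |z.im| := sq_le_sq.mp (im_sq_le_of_sq_eq_add (by norm_num) hs).1
  calc ‖W₁ z‖ ≤ Real.exp |((π : ℂ) * s).im| := norm_cos_le_exp_abs_im _
    _ ≤ Real.exp (π * |z.im|) := by
      rw [im_ofReal_mul, abs_mul, abs_of_pos Real.pi_pos]
      gcongr

theorem exp_mul_le_norm_W₁ {z : ℂ} (hz : 1 ≤ |z.im|) :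
    Real.exp (-π / 2) / 4 * Real.exp (π * |z.im|) ≤ ‖W₁ z‖ := by
  set s := (z ^ 2 + 1 / 4) ^ (1 / 2 : ℂ)
  have hs : s ^ 2 = z ^ 2 + ((1 / 4 : ℝ) : ℂ) := by push_cast; exact cpow_one_div_two_sq _
  set b := π * |s.im|
  have hb : π * |z.im| - π / 2 ≤ b := by
    have h := (im_sq_le_of_sq_eq_add (by norm_num) hs).2
    have : |z.im| - 1 / 2 ≤ |s.im| := by nlinarith [sq_abs z.im, abs_nonneg s.im, sq_abs s.im]
    nlinarith [Real.pi_pos]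
  have hcos := exp_abs_im_sub_exp_neg_abs_im_le ((π : ℂ) * s)
  rw [im_ofReal_mul, abs_mul, abs_of_pos Real.pi_pos] at hcos
  -- `b ≥ π/2 > 1`, so `e^{-b} ≤ 1 ≤ e^b / 2`
  have hexp : 2 ≤ Real.exp b := by
    nlinarith [Real.add_one_le_exp b, Real.pi_gt_three]
  have hexp' : Real.exp (-b) ≤ 1 := Real.exp_le_one_iff.mpr (neg_nonpos.mpr (by positivity))
  calc Real.exp (-π / 2) / 4 * Real.exp (π * |z.im|)
      = Real.exp (π * |z.im| - π / 2) / 4 := by rw [sub_eq_add_neg, Real.exp_add]; ring_nf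
    _ ≤ Real.exp b / 4 := by gcongr
    _ ≤ ‖W₁ z‖ := by change _ ≤ ‖cos _‖; linarith

theorem isSineType_W₁ : IsSineType W₁ where
  entire := differentiable_W₁
  separated := ⟨1, one_pos, fun _ hlam _ hmu => one_le_norm_sub_of_W₁_eq_zero hlam hmu⟩
  bounds := ⟨1, one_pos, Real.exp (-π / 2) / 4, by positivity, 1, one_pos, fun _ hz =>
    ⟨exp_mul_le_norm_W₁ hz, (one_mul (Real.exp _)).symm ▸ norm_W₁_le _⟩⟩

end AttenuationOne

/-- `W₁(λ) = cos(π√(λ² + 1/4))` is a generating function for attenuation at Fresnel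
number `𝔣 = 1`, with zero set `{±√(k² + k) : k ∈ ℕ}`. -/
theorem generating_function_attenuation_one
    (W₁ : ℂ → ℂ)
    (hW₁ : ∀ z : ℂ, W₁ z = Complex.cos ((π : ℂ) * (z ^ 2 + 1 / 4) ^ ((1 : ℂ) / 2))) :
    -- the value is independent of the branch of the square root
    (∀ z w : ℂ, w ^ 2 = z ^ 2 + 1 / 4 → W₁ z = Complex.cos ((π : ℂ) * w)) ∧
    -- W₁ is of sine-type
    IsSineType W₁ ∧
    -- all zeros are real
    (∀ z : ℂ, W₁ z = 0 → ∃ x : ℝ, z = (x : ℂ)) ∧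
    -- the zero set is exactly {λ : λ² = k² + k for some k ∈ ℕ}
    {z : ℂ | W₁ z = 0} = {z : ℂ | ∃ k : ℕ, z ^ 2 = (k : ℂ) ^ 2 + k} ∧
    -- which is {±√(k² + k) : k ∈ ℕ}
    {z : ℂ | W₁ z = 0} =
      {z : ℂ | ∃ k : ℕ, z = (Real.sqrt ((k : ℝ) ^ 2 + k) : ℂ) ∨
        z = -(Real.sqrt ((k : ℝ) ^ 2 + k) : ℂ)} ∧
    -- W₁ is a generating function for attenuation at 𝔣 = 1
    IsGeneratingAtten 1 W₁ := by
  obtain rfl : W₁ = AttenuationOne.W₁ := funext hW₁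
  have hzeros : {z | AttenuationOne.W₁ z = 0} = {z : ℂ | ∃ k : ℕ, z ^ 2 = (k : ℂ) ^ 2 + k} :=
    Set.ext fun _ => AttenuationOne.W₁_eq_zero_iff
  have hreal (z : ℂ) (hz : AttenuationOne.W₁ z = 0) : ∃ x : ℝ, z = x :=
    let ⟨x, _, hx, _⟩ := AttenuationOne.exists_real_of_W₁_eq_zero hz
    ⟨x, hx⟩
  have hquantized (z : ℂ) (hz : AttenuationOne.W₁ z = 0) : ∃ l : ℤ, z ^ 2 = (1 : ℝ) * (l : ℂ) :=
    let ⟨k, hk⟩ := AttenuationOne.W₁_eq_zero_iff.mp hz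
    ⟨k ^ 2 + k, by rw [hk]; push_cast; ring⟩
  refine ⟨fun _ _ => AttenuationOne.W₁_eq_cos_of_sq_eq, AttenuationOne.isSineType_W₁, hreal,
    hzeros, ?_, ⟨AttenuationOne.isSineType_W₁, hreal, hquantized⟩⟩
  rw [hzeros]
  exact Set.ext fun _ => exists_congr fun _ => AttenuationOne.sq_eq_nat_sq_add_self_iff
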